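/- Let W1 and W2 be B-DMCs with finite output alphabets Y1 and Y2, and let (W⁻, W⁺) be their irregular kernel transform. Then Z(W⁻) + Z(W⁺) ≤ Z(W1) + Z(W2) (the one-step supermartingale property of the averaged Bhattacharyya parameter under the irregular kernel transform). -/

import Mathlib

open Finset Real


/-- A binary-input discrete memoryless channel (B-DMC): nonnegative entries
and each row (fixed input) sums to 1. -/
def IsBDMC {Y : Type*} [Fintype Y] (W : Y → ZMod 2 → ℝ) : Prop :=
  (∀ y x, 0 ≤ W y x) ∧ (∀ x, ∑ y, W y x = 1)

/-- Bhattacharyya parameter Z(W). -/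
noncomputable def bhatt {Y : Type*} [Fintype Y] (W : Y → ZMod 2 → ℝ) : ℝ :=
  ∑ y, Real.sqrt (W y 0 * W y 1)

/-- The minus-channel W⁻ of the irregular kernel transform. -/
noncomputable def Wminus {Y1 Y2 : Type*} (W1 : Y1 → ZMod 2 → ℝ)
    (W2 : Y2 → ZMod 2 → ℝ) : Y1 × Y2 → ZMod 2 → ℝ :=
  fun y u1 => ∑ u2 : ZMod 2, (1 / 2) * W1 y.1 (u1 + u2) * W2 y.2 u2

/-- The plus-channel W⁺ of the irregular kernel transform. -/
noncomputable def Wplus {Y1 Y2 : Type*} (W1 : Y1 → ZMod 2 → ℝ)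
    (W2 : Y2 → ZMod 2 → ℝ) : Y1 × Y2 × ZMod 2 → ZMod 2 → ℝ :=
  fun y u2 => (1 / 2) * W1 y.1 (y.2.2 + u2) * W2 y.2.1 u2

/-!
Write `a, b = W1(y1|0), W1(y1|1)` and `c, d = W2(y2|0), W2(y2|1)`. Then `Z(W⁺) = Z(W1) Z(W2)`,
and since `∑ (c + d)/2 = ∑ (a + b)/2 = 1`, the inequality reduces to one for each `(y1, y2)`:
`√((ac+bd)/2 · (bc+ad)/2) + √(ab)√(cd) ≤ √(ab)(c+d)/2 + √(cd)(a+b)/2`. With `s = √(ab) ≤ p = (a+b)/2`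
and `t = √(cd) ≤ q = (c+d)/2`, this follows from the identity
`(ac+bd)(bc+ad)/4 = (sq + tp - st)² - 2st(p - s)(q - t)`.
-/

lemma ZMod.sum_univ_two {M : Type*} [AddCommMonoid M] (f : ZMod 2 → M) :
    ∑ x, f x = f 0 + f 1 :=
  Fin.sum_univ_two f

lemma sqrt_mul_le_add_div_two {a b : ℝ} (ha : 0 ≤ a) (hb : 0 ≤ b) :
    √(a * b) ≤ (a + b) / 2 :=
  Real.sqrt_le_iff.mpr ⟨by positivity, by nlinarith [sq_nonneg (a - b)]⟩

lemma sqrt_cross_mul_add_sqrt_mul_sqrt_le {a b c d : ℝ} (ha : 0 ≤ a) (hb : 0 ≤ b) (hc : 0 ≤ c)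
    (hd : 0 ≤ d) :
    √((a * c + b * d) / 2 * ((b * c + a * d) / 2)) + √(a * b) * √(c * d)
      ≤ √(a * b) * ((c + d) / 2) + √(c * d) * ((a + b) / 2) := by
  set s := √(a * b)
  set t := √(c * d)
  set p := (a + b) / 2
  set q := (c + d) / 2
  have hs : 0 ≤ s := Real.sqrt_nonneg _
  have ht : 0 ≤ t := Real.sqrt_nonneg _
  have hsp : s ≤ p := sqrt_mul_le_add_div_two ha hb
  have htq : t ≤ q := sqrt_mul_le_add_div_two hc hd
  have hs2 : s ^ 2 = a * b := Real.sq_sqrt (mul_nonneg ha hb)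
  have ht2 : t ^ 2 = c * d := Real.sq_sqrt (mul_nonneg hc hd)
  have hgap : 0 ≤ s * t * ((p - s) * (q - t)) :=
    mul_nonneg (mul_nonneg hs ht) (mul_nonneg (sub_nonneg.mpr hsp) (sub_nonneg.mpr htq))
  have hid : (a * c + b * d) / 2 * ((b * c + a * d) / 2)
      = (s * q + t * p - s * t) ^ 2 - 2 * (s * t * ((p - s) * (q - t))) := by
    simp only [p, q]
    linear_combination (-(c ^ 2 + d ^ 2) / 4 + t ^ 2 / 2) * hs2
      + (-(a ^ 2 + b ^ 2) / 4 + s ^ 2 / 2) * ht2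
  have hroot : √((a * c + b * d) / 2 * ((b * c + a * d) / 2)) ≤ s * q + t * p - s * t :=
    Real.sqrt_le_iff.mpr ⟨by nlinarith, by linarith⟩
  linarith

lemma IsBDMC.sum_avg_eq_one {Y : Type*} [Fintype Y] {W : Y → ZMod 2 → ℝ} (h : IsBDMC W) :
    ∑ y, (W y 0 + W y 1) / 2 = 1 := by
  rw [← Finset.sum_div, Finset.sum_add_distrib, h.2 0, h.2 1]
  norm_num

lemma bhatt_Wminus {Y1 Y2 : Type*} [Fintype Y1] [Fintype Y2]
    (W1 : Y1 → ZMod 2 → ℝ) (W2 : Y2 → ZMod 2 → ℝ) :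
    bhatt (Wminus W1 W2) = ∑ y1, ∑ y2,
      √((W1 y1 0 * W2 y2 0 + W1 y1 1 * W2 y2 1) / 2
        * ((W1 y1 1 * W2 y2 0 + W1 y1 0 * W2 y2 1) / 2)) := by
  rw [bhatt, Fintype.sum_prod_type]
  refine Finset.sum_congr rfl fun y1 _ => Finset.sum_congr rfl fun y2 _ => ?_
  simp only [Wminus, ZMod.sum_univ_two, add_zero, zero_add, CharTwo.add_self_eq_zero]
  congr 1
  ring

lemma bhatt_Wplus {Y1 Y2 : Type*} [Fintype Y1] [Fintype Y2]
    {W1 : Y1 → ZMod 2 → ℝ} (W2 : Y2 → ZMod 2 → ℝ) (hW1 : ∀ y x, 0 ≤ W1 y x) :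
    bhatt (Wplus W1 W2) = bhatt W1 * bhatt W2 := by
  rw [bhatt, bhatt, bhatt, Finset.sum_mul_sum, Fintype.sum_prod_type]
  refine Finset.sum_congr rfl fun y1 _ => ?_
  rw [Fintype.sum_prod_type]
  refine Finset.sum_congr rfl fun y2 _ => ?_
  have hprod : ∀ u1 : ZMod 2, Wplus W1 W2 (y1, y2, u1) 0 * Wplus W1 W2 (y1, y2, u1) 1
      = (1 / 2) ^ 2 * ((W1 y1 0 * W1 y1 1) * (W2 y2 0 * W2 y2 1)) := by
    intro u1
    obtain rfl | rfl : u1 = 0 ∨ u1 = 1 := by decide +revert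
    all_goals simp only [Wplus, add_zero, zero_add, CharTwo.add_self_eq_zero]; ring
  simp only [hprod, ZMod.sum_univ_two]
  rw [Real.sqrt_mul (by positivity), Real.sqrt_sq (by norm_num),
    Real.sqrt_mul (mul_nonneg (hW1 y1 0) (hW1 y1 1))]
  ring

/-- Z(W⁻) + Z(W⁺) ≤ Z(W1) + Z(W2). -/
theorem bhatt_kernel_supermartingale {Y1 Y2 : Type*} [Fintype Y1] [Fintype Y2]
    (W1 : Y1 → ZMod 2 → ℝ) (W2 : Y2 → ZMod 2 → ℝ)
    (h1 : IsBDMC W1) (h2 : IsBDMC W2) :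
    bhatt (Wminus W1 W2) + bhatt (Wplus W1 W2) ≤ bhatt W1 + bhatt W2 := by
  calc bhatt (Wminus W1 W2) + bhatt (Wplus W1 W2)
      = ∑ y1, ∑ y2, (√((W1 y1 0 * W2 y2 0 + W1 y1 1 * W2 y2 1) / 2
          * ((W1 y1 1 * W2 y2 0 + W1 y1 0 * W2 y2 1) / 2))
          + √(W1 y1 0 * W1 y1 1) * √(W2 y2 0 * W2 y2 1)) := by
        rw [bhatt_Wminus, bhatt_Wplus W2 h1.1, bhatt, bhatt, Finset.sum_mul_sum]
        simp only [← Finset.sum_add_distrib]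
    _ ≤ ∑ y1, ∑ y2, (√(W1 y1 0 * W1 y1 1) * ((W2 y2 0 + W2 y2 1) / 2)
          + √(W2 y2 0 * W2 y2 1) * ((W1 y1 0 + W1 y1 1) / 2)) :=
        Finset.sum_le_sum fun y1 _ => Finset.sum_le_sum fun y2 _ =>
          sqrt_cross_mul_add_sqrt_mul_sqrt_le (h1.1 y1 0) (h1.1 y1 1) (h2.1 y2 0) (h2.1 y2 1)
    _ = bhatt W1 * ∑ y2, (W2 y2 0 + W2 y2 1) / 2
          + (∑ y1, (W1 y1 0 + W1 y1 1) / 2) * bhatt W2 := by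
        simp only [bhatt, Finset.sum_mul_sum, ← Finset.sum_add_distrib]
        refine Finset.sum_congr rfl fun y1 _ => Finset.sum_congr rfl fun y2 _ => ?_
        ring
    _ = bhatt W1 + bhatt W2 := by rw [h1.sum_avg_eq_one, h2.sum_avg_eq_one, mul_one, one_mul]
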